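/- Let U ⊆ ℝ² be open, let x¹, x², x³ : U → ℝ be smooth, let g : U → (2×2 real matrices) be given by g_{ab} = Σ_{i=1}^{3} ∂_a x^i ∂_b x^i (a,b ∈ {1,2}), and assume det g > 0 on U. Write ρ = √(det g) and let g^{rs} denote the entries of the inverse matrix g^{−1}. Then for every smooth f : U → ℝ, (1/ρ) Σ_{r,s=1}^{2} ∂_r ( ρ g^{rs} ∂_s f ) = Σ_{i=1}^{3} (1/ρ) { x^i, (1/ρ) { x^i, f } }, where {u,v} = ∂_1 u ∂_2 v − ∂_2 u ∂_1 v. -/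

import Mathlib

noncomputable section

/-- Partial derivative in the first coordinate of ℝ². -/
def d1 (u : ℝ × ℝ → ℝ) (p : ℝ × ℝ) : ℝ := deriv (fun t => u (t, p.2)) p.1

/-- Partial derivative in the second coordinate of ℝ². -/
def d2 (u : ℝ × ℝ → ℝ) (p : ℝ × ℝ) : ℝ := deriv (fun t => u (p.1, t)) p.2

/-- Partial derivative ∂_a for a : Fin 2. -/
def dcoord (i : Fin 2) (u : ℝ × ℝ → ℝ) (p : ℝ × ℝ) : ℝ :=
  if i = 0 then d1 u p else d2 u p

/-- The coordinate Poisson bracket {u,v} = ∂_1 u ∂_2 v − ∂_2 u ∂_1 v. -/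
def pb (u v : ℝ × ℝ → ℝ) (p : ℝ × ℝ) : ℝ := d1 u p * d2 v p - d2 u p * d1 v p

/-- The induced metric g_{ab} = Σ_{i=1}^{3} ∂_a x^i ∂_b x^i of an embedding
x : U → ℝ³. -/
def metg (x : Fin 3 → ℝ × ℝ → ℝ) (p : ℝ × ℝ) : Matrix (Fin 2) (Fin 2) ℝ :=
  Matrix.of fun i j => ∑ k : Fin 3, dcoord i (x k) p * dcoord j (x k) p

end

open Filter Topology ContDiff


section Aux
variable {F : Type*} [NormedAddCommGroup F] [NormedSpace ℝ F]
variable {u v : ℝ × ℝ → F} {p : ℝ × ℝ}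

lemma hasDerivAt_slice1 {u' : ℝ × ℝ →L[ℝ] F} (h : HasFDerivAt u u' p) :
    HasDerivAt (fun t => u (t, p.2)) (u' (1, 0)) p.1 := by
  have h' : HasFDerivAt u u' (p.1, p.2) := by rwa [Prod.mk.eta]
  have h2 : HasDerivAt (fun t : ℝ => (t, p.2)) ((1:ℝ), (0:ℝ)) p.1 :=
    (hasDerivAt_id p.1).prodMk (hasDerivAt_const p.1 p.2)
  exact h'.comp_hasDerivAt p.1 h2

lemma hasDerivAt_slice2 {u' : ℝ × ℝ →L[ℝ] F} (h : HasFDerivAt u u' p) :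
    HasDerivAt (fun t => u (p.1, t)) (u' (0, 1)) p.2 := by
  have h' : HasFDerivAt u u' (p.1, p.2) := by rwa [Prod.mk.eta]
  have h2 : HasDerivAt (fun t : ℝ => (p.1, t)) ((0:ℝ), (1:ℝ)) p.2 :=
    (hasDerivAt_const p.2 p.1).prodMk (hasDerivAt_id p.2)
  exact h'.comp_hasDerivAt p.2 h2
end Aux

section Aux2
variable {u v : ℝ × ℝ → ℝ} {p : ℝ × ℝ}

lemma diff_slice1 (h : DifferentiableAt ℝ u p) :
    DifferentiableAt ℝ (fun t => u (t, p.2)) p.1 :=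
  (hasDerivAt_slice1 h.hasFDerivAt).differentiableAt

lemma diff_slice2 (h : DifferentiableAt ℝ u p) :
    DifferentiableAt ℝ (fun t => u (p.1, t)) p.2 :=
  (hasDerivAt_slice2 h.hasFDerivAt).differentiableAt

lemma d1_eq_fderiv (h : DifferentiableAt ℝ u p) : d1 u p = fderiv ℝ u p (1, 0) :=
  (hasDerivAt_slice1 h.hasFDerivAt).deriv

lemma d2_eq_fderiv (h : DifferentiableAt ℝ u p) : d2 u p = fderiv ℝ u p (0, 1) :=
  (hasDerivAt_slice2 h.hasFDerivAt).deriv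

lemma d1_congr (h : u =ᶠ[nhds p] v) : d1 u p = d1 v p := by
  have ht : Filter.Tendsto (fun t : ℝ => (t, p.2)) (nhds p.1) (nhds p) := by
    have := (Continuous.tendsto (show Continuous fun t : ℝ => (t, p.2) from continuous_id.prodMk continuous_const) p.1)
    simpa using this
  exact Filter.EventuallyEq.deriv_eq (h.comp_tendsto ht)

lemma d2_congr (h : u =ᶠ[nhds p] v) : d2 u p = d2 v p := by
  have ht : Filter.Tendsto (fun t : ℝ => (p.1, t)) (nhds p.2) (nhds p) := by
    have := (Continuous.tendsto (show Continuous fun t : ℝ => (p.1, t) from continuous_const.prodMk continuous_id) p.2)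
    simpa using this
  exact Filter.EventuallyEq.deriv_eq (h.comp_tendsto ht)

lemma d1_mul (hu : DifferentiableAt ℝ u p) (hv : DifferentiableAt ℝ v p) :
    d1 (fun q => u q * v q) p = d1 u p * v p + u p * d1 v p := by
  have := deriv_fun_mul (diff_slice1 hu) (diff_slice1 hv)
  simpa [d1] using this

lemma d2_mul (hu : DifferentiableAt ℝ u p) (hv : DifferentiableAt ℝ v p) :
    d2 (fun q => u q * v q) p = d2 u p * v p + u p * d2 v p := by
  have := deriv_fun_mul (diff_slice2 hu) (diff_slice2 hv)
  simpa [d2] using this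

lemma d1_add (hu : DifferentiableAt ℝ u p) (hv : DifferentiableAt ℝ v p) :
    d1 (fun q => u q + v q) p = d1 u p + d1 v p := by
  have := deriv_fun_add (diff_slice1 hu) (diff_slice1 hv)
  simpa [d1] using this

lemma d2_add (hu : DifferentiableAt ℝ u p) (hv : DifferentiableAt ℝ v p) :
    d2 (fun q => u q + v q) p = d2 u p + d2 v p := by
  have := deriv_fun_add (diff_slice2 hu) (diff_slice2 hv)
  simpa [d2] using this

lemma d1_neg : d1 (fun q => -u q) p = -d1 u p := by
  simp only [d1]
  exact deriv.neg (f := fun t => u (t, p.2)) (x := p.1)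

lemma d2_neg : d2 (fun q => -u q) p = -d2 u p := by
  simp only [d2]
  exact deriv.neg (f := fun t => u (p.1, t)) (x := p.2)

lemma d1_sum {n : ℕ} {A : Fin n → ℝ × ℝ → ℝ}
    (h : ∀ i, DifferentiableAt ℝ (A i) p) :
    d1 (fun q => ∑ i, A i q) p = ∑ i, d1 (A i) p := by
  have := deriv_fun_sum (u := Finset.univ) (A := fun i (t : ℝ) => A i (t, p.2)) (x := p.1)
    (fun i _ => diff_slice1 (h i))
  simpa [d1] using this

lemma d2_sum {n : ℕ} {A : Fin n → ℝ × ℝ → ℝ}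
    (h : ∀ i, DifferentiableAt ℝ (A i) p) :
    d2 (fun q => ∑ i, A i q) p = ∑ i, d2 (A i) p := by
  have := deriv_fun_sum (u := Finset.univ) (A := fun i (t : ℝ) => A i (p.1, t)) (x := p.2)
    (fun i _ => diff_slice2 (h i))
  simpa [d2] using this
end Aux2

section Aux3
variable {F : Type*} [NormedAddCommGroup F] [NormedSpace ℝ F]
variable {U : Set (ℝ × ℝ)} {u : ℝ × ℝ → ℝ} {p : ℝ × ℝ}

lemma diffAt_of_contDiffOn' {u : ℝ × ℝ → F} (hU : IsOpen U) (h : ContDiffOn ℝ ∞ u U)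
    (hp : p ∈ U) : DifferentiableAt ℝ u p :=
  ((h p hp).contDiffAt (hU.mem_nhds hp)).differentiableAt (by simp)

lemma contDiffOn_d1 (hU : IsOpen U) (h : ContDiffOn ℝ ∞ u U) :
    ContDiffOn ℝ ∞ (d1 u) U := by
  have h1 : ContDiffOn ℝ ∞ (fderiv ℝ u) U := h.fderiv_of_isOpen hU (by simp)
  have h2 : ContDiffOn ℝ ∞ (fun q => fderiv ℝ u q (1, 0)) U :=
    h1.clm_apply contDiffOn_const
  exact h2.congr fun q hq => d1_eq_fderiv (diffAt_of_contDiffOn' hU h hq)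

lemma contDiffOn_d2 (hU : IsOpen U) (h : ContDiffOn ℝ ∞ u U) :
    ContDiffOn ℝ ∞ (d2 u) U := by
  have h1 : ContDiffOn ℝ ∞ (fderiv ℝ u) U := h.fderiv_of_isOpen hU (by simp)
  have h2 : ContDiffOn ℝ ∞ (fun q => fderiv ℝ u q (0, 1)) U :=
    h1.clm_apply contDiffOn_const
  exact h2.congr fun q hq => d2_eq_fderiv (diffAt_of_contDiffOn' hU h hq)

lemma clairaut (hU : IsOpen U) (h : ContDiffOn ℝ ∞ u U) (hp : p ∈ U) :
    d1 (d2 u) p = d2 (d1 u) p := by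
  have hev : ∀ᶠ q in nhds p, q ∈ U := hU.mem_nhds hp
  have hd : ∀ᶠ q in nhds p, DifferentiableAt ℝ u q :=
    hev.mono fun q hq => diffAt_of_contDiffOn' hU h hq
  have h1 : d1 u =ᶠ[nhds p] fun q => fderiv ℝ u q (1, 0) :=
    hd.mono fun q hq => d1_eq_fderiv hq
  have h2 : d2 u =ᶠ[nhds p] fun q => fderiv ℝ u q (0, 1) :=
    hd.mono fun q hq => d2_eq_fderiv hq
  have hΦ : DifferentiableAt ℝ (fderiv ℝ u) p :=
    diffAt_of_contDiffOn' hU (h.fderiv_of_isOpen hU (by simp)) hp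
  have hsymm : IsSymmSndFDerivAt ℝ u p :=
    ((h p hp).contDiffAt (hU.mem_nhds hp)).isSymmSndFDerivAt (by simp only [minSmoothness_of_isRCLikeNormedField]; exact WithTop.coe_le_coe.mpr (le_top : (2:ℕ∞) ≤ ⊤))
  have hA : d1 (d2 u) p = fderiv ℝ (fderiv ℝ u) p (1, 0) (0, 1) := by
    rw [d1_congr h2]
    have hs := (hasDerivAt_slice1 hΦ.hasFDerivAt).clm_apply
      (hasDerivAt_const p.1 ((0:ℝ), (1:ℝ)))
    simpa [d1] using hs.deriv
  have hB : d2 (d1 u) p = fderiv ℝ (fderiv ℝ u) p (0, 1) (1, 0) := by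
    rw [d2_congr h1]
    have hs := (hasDerivAt_slice2 hΦ.hasFDerivAt).clm_apply
      (hasDerivAt_const p.2 ((1:ℝ), (0:ℝ)))
    simpa [d2] using hs.deriv
  rw [hA, hB, hsymm (1, 0) (0, 1)]
end Aux3

noncomputable section
namespace LB
variable (x : Fin 3 → ℝ × ℝ → ℝ) (f : ℝ × ℝ → ℝ)
def EE (q : ℝ × ℝ) : ℝ := ∑ k : Fin 3, d1 (x k) q * d1 (x k) q
def FF (q : ℝ × ℝ) : ℝ := ∑ k : Fin 3, d1 (x k) q * d2 (x k) q
def GG (q : ℝ × ℝ) : ℝ := ∑ k : Fin 3, d2 (x k) q * d2 (x k) q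
def DD (q : ℝ × ℝ) : ℝ := EE x q * GG x q - FF x q * FF x q
def rho (q : ℝ × ℝ) : ℝ := Real.sqrt (DD x q)
def Bf (i : Fin 3) (q : ℝ × ℝ) : ℝ :=
  (d1 (x i) q * d2 f q - d2 (x i) q * d1 f q) / rho x q
def A1 (q : ℝ × ℝ) : ℝ := (GG x q * d1 f q - FF x q * d2 f q) / rho x q
def A2 (q : ℝ × ℝ) : ℝ := (EE x q * d2 f q - FF x q * d1 f q) / rho x q

lemma metg00 (q : ℝ × ℝ) : metg x q 0 0 = EE x q := by simp [metg, dcoord, EE]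
lemma metg01 (q : ℝ × ℝ) : metg x q 0 1 = FF x q := by simp [metg, dcoord, FF]
lemma metg10 (q : ℝ × ℝ) : metg x q 1 0 = FF x q := by
  simp [metg, dcoord, FF, mul_comm]
lemma metg11 (q : ℝ × ℝ) : metg x q 1 1 = GG x q := by simp [metg, dcoord, GG]
lemma metg_det (q : ℝ × ℝ) : (metg x q).det = DD x q := by
  rw [Matrix.det_fin_two, metg00, metg01, metg10, metg11]; rfl
lemma metg_inv (q : ℝ × ℝ) :
    (metg x q)⁻¹ = (DD x q)⁻¹ • !![GG x q, -(FF x q); -(FF x q), EE x q] := by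
  rw [Matrix.inv_def, Matrix.adjugate_fin_two, metg_det, Ring.inverse_eq_inv',
    metg00, metg01, metg10, metg11]
end LB
end

open LB

/-- For a smooth embedding x : U → ℝ³ with induced metric g
having positive determinant on the open set U, ρ = √(det g), and any smooth
f : U → ℝ, the coordinate Laplace–Beltrami operator equals the double Poisson
bracket expression: (1/ρ) Σ_{r,s} ∂_r(ρ g^{rs} ∂_s f) =
Σ_i (1/ρ){x^i, (1/ρ){x^i, f}}. -/
theorem laplace_beltrami_poisson (U : Set (ℝ × ℝ)) (hU : IsOpen U)
    (x : Fin 3 → ℝ × ℝ → ℝ) (hx : ∀ i, ContDiffOn ℝ (⊤ : ℕ∞) (x i) U)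
    (hdet : ∀ p ∈ U, 0 < (metg x p).det)
    (f : ℝ × ℝ → ℝ) (hf : ContDiffOn ℝ (⊤ : ℕ∞) f U) :
    ∀ p ∈ U,
      (1 / Real.sqrt (metg x p).det) *
        ∑ r : Fin 2, ∑ s : Fin 2,
          dcoord r (fun q => Real.sqrt (metg x q).det * (metg x q)⁻¹ r s * dcoord s f q) p
      = ∑ i : Fin 3,
          (1 / Real.sqrt (metg x p).det) *
            pb (x i) (fun q => (1 / Real.sqrt (metg x q).det) * pb (x i) f q) p := by
  intro p hp
  have hx' : ∀ i, ContDiffOn ℝ ∞ (x i) U := fun i => (hx i).of_le (by simp)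
  have hf' : ContDiffOn ℝ ∞ f U := hf.of_le (by simp)
  have hDpos : ∀ q ∈ U, 0 < DD x q := fun q hq => by
    rw [← metg_det]; exact hdet q hq
  have hrpos : ∀ q ∈ U, 0 < rho x q := fun q hq => Real.sqrt_pos.mpr (hDpos q hq)
  have hrsq : ∀ q ∈ U, rho x q * rho x q = DD x q := fun q hq =>
    Real.mul_self_sqrt (le_of_lt (hDpos q hq))
  -- smoothness
  have hE : ContDiffOn ℝ ∞ (EE x) U :=
    ContDiffOn.sum fun k _ => (contDiffOn_d1 hU (hx' k)).mul (contDiffOn_d1 hU (hx' k))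
  have hFm : ContDiffOn ℝ ∞ (FF x) U :=
    ContDiffOn.sum fun k _ => (contDiffOn_d1 hU (hx' k)).mul (contDiffOn_d2 hU (hx' k))
  have hG : ContDiffOn ℝ ∞ (GG x) U :=
    ContDiffOn.sum fun k _ => (contDiffOn_d2 hU (hx' k)).mul (contDiffOn_d2 hU (hx' k))
  have hD : ContDiffOn ℝ ∞ (DD x) U := (hE.mul hG).sub (hFm.mul hFm)
  have hr : ContDiffOn ℝ ∞ (rho x) U := fun q hq =>
    (Real.contDiffAt_sqrt (ne_of_gt (hDpos q hq))).comp_contDiffWithinAt q (hD q hq)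
  have hrne : ∀ q ∈ U, rho x q ≠ 0 := fun q hq => ne_of_gt (hrpos q hq)
  have hf1 : ContDiffOn ℝ ∞ (d1 f) U := contDiffOn_d1 hU hf'
  have hf2 : ContDiffOn ℝ ∞ (d2 f) U := contDiffOn_d2 hU hf'
  have hB : ∀ i, ContDiffOn ℝ ∞ (Bf x f i) U := fun i =>
    (((contDiffOn_d1 hU (hx' i)).mul hf2).sub ((contDiffOn_d2 hU (hx' i)).mul hf1)).div hr hrne
  have hP1 : ContDiffOn ℝ ∞ (fun q => GG x q * d1 f q / rho x q) U :=
    (hG.mul hf1).div hr hrne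
  have hP2 : ContDiffOn ℝ ∞ (fun q => -(FF x q * d2 f q / rho x q)) U :=
    ((hFm.mul hf2).div hr hrne).neg
  have hP3 : ContDiffOn ℝ ∞ (fun q => -(FF x q * d1 f q / rho x q)) U :=
    ((hFm.mul hf1).div hr hrne).neg
  have hP4 : ContDiffOn ℝ ∞ (fun q => EE x q * d2 f q / rho x q) U :=
    (hE.mul hf2).div hr hrne
  -- LHS eventual rewrites
  have hmem : ∀ᶠ q in nhds p, q ∈ U := hU.mem_nhds hp
  have e00 : (fun q => Real.sqrt (metg x q).det * (metg x q)⁻¹ 0 0 * d1 f q)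
      =ᶠ[nhds p] fun q => GG x q * d1 f q / rho x q := by
    filter_upwards [hmem] with q hq
    rw [metg_det, metg_inv]
    have h1 := hrsq q hq
    have h2 := hrne q hq
    show rho x q * ((DD x q)⁻¹ • !![GG x q, -(FF x q); -(FF x q), EE x q]) 0 0 * d1 f q = _
    rw [Matrix.smul_apply, ← h1]
    simp only [Matrix.cons_val', Matrix.cons_val_zero, Matrix.empty_val',
      Matrix.cons_val_fin_one, smul_eq_mul, Matrix.of_apply]
    field_simp
  have e01 : (fun q => Real.sqrt (metg x q).det * (metg x q)⁻¹ 0 1 * d2 f q)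
      =ᶠ[nhds p] fun q => -(FF x q * d2 f q / rho x q) := by
    filter_upwards [hmem] with q hq
    rw [metg_det, metg_inv]
    have h1 := hrsq q hq
    have h2 := hrne q hq
    show rho x q * ((DD x q)⁻¹ • !![GG x q, -(FF x q); -(FF x q), EE x q]) 0 1 * d2 f q = _
    rw [Matrix.smul_apply, ← h1]
    simp only [Matrix.cons_val', Matrix.cons_val_zero, Matrix.cons_val_one, Matrix.head_cons,
      Matrix.empty_val', Matrix.cons_val_fin_one, smul_eq_mul, Matrix.of_apply]
    field_simp
  have e10 : (fun q => Real.sqrt (metg x q).det * (metg x q)⁻¹ 1 0 * d1 f q)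
      =ᶠ[nhds p] fun q => -(FF x q * d1 f q / rho x q) := by
    filter_upwards [hmem] with q hq
    rw [metg_det, metg_inv]
    have h1 := hrsq q hq
    have h2 := hrne q hq
    show rho x q * ((DD x q)⁻¹ • !![GG x q, -(FF x q); -(FF x q), EE x q]) 1 0 * d1 f q = _
    rw [Matrix.smul_apply, ← h1]
    simp only [Matrix.cons_val', Matrix.cons_val_zero, Matrix.cons_val_one, Matrix.head_cons,
      Matrix.empty_val', Matrix.cons_val_fin_one, Matrix.head_fin_const, smul_eq_mul, Matrix.of_apply]
    field_simp
  have e11 : (fun q => Real.sqrt (metg x q).det * (metg x q)⁻¹ 1 1 * d2 f q)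
      =ᶠ[nhds p] fun q => EE x q * d2 f q / rho x q := by
    filter_upwards [hmem] with q hq
    rw [metg_det, metg_inv]
    have h1 := hrsq q hq
    have h2 := hrne q hq
    show rho x q * ((DD x q)⁻¹ • !![GG x q, -(FF x q); -(FF x q), EE x q]) 1 1 * d2 f q = _
    rw [Matrix.smul_apply, ← h1]
    simp only [Matrix.cons_val', Matrix.cons_val_zero, Matrix.cons_val_one, Matrix.head_cons,
      Matrix.empty_val', Matrix.cons_val_fin_one, Matrix.head_fin_const, smul_eq_mul, Matrix.of_apply]
    field_simp
  -- assemble LHS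
  have hA1d : d1 (A1 x f) p
      = d1 (fun q => GG x q * d1 f q / rho x q) p + d1 (fun q => -(FF x q * d2 f q / rho x q)) p := by
    have hfun : A1 x f = fun q =>
        GG x q * d1 f q / rho x q + -(FF x q * d2 f q / rho x q) := by
      funext q; simp only [A1]; ring
    rw [hfun, d1_add (diffAt_of_contDiffOn' hU hP1 hp) (diffAt_of_contDiffOn' hU hP2 hp)]
  have hA2d : d2 (A2 x f) p
      = d2 (fun q => -(FF x q * d1 f q / rho x q)) p + d2 (fun q => EE x q * d2 f q / rho x q) p := by
    have hfun : A2 x f = fun q =>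
        -(FF x q * d1 f q / rho x q) + EE x q * d2 f q / rho x q := by
      funext q; simp only [A2]; ring
    rw [hfun, d2_add (diffAt_of_contDiffOn' hU hP3 hp) (diffAt_of_contDiffOn' hU hP4 hp)]
  have hLHS : (1 / Real.sqrt (metg x p).det) *
        ∑ r : Fin 2, ∑ s : Fin 2,
          dcoord r (fun q => Real.sqrt (metg x q).det * (metg x q)⁻¹ r s * dcoord s f q) p
      = (1 / rho x p) * (d1 (A1 x f) p + d2 (A2 x f) p) := by
    rw [metg_det]
    simp only [Fin.sum_univ_two, dcoord, if_true, reduceIte, Fin.one_eq_zero_iff,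
      OfNat.ofNat_ne_one, ite_false]
    rw [d1_congr e00, d1_congr e01, d2_congr e10, d2_congr e11, hA1d, hA2d]
    show (1 / rho x p) * _ = _
    ring
  -- RHS
  have hWB : ∀ i : Fin 3, (fun q => (1 / Real.sqrt (metg x q).det) * pb (x i) f q) = Bf x f i := by
    intro i; funext q
    rw [metg_det]
    show 1 / rho x q * pb (x i) f q = _
    simp only [pb, Bf]; ring
  have hdB : ∀ i, DifferentiableAt ℝ (Bf x f i) p := fun i =>
    diffAt_of_contDiffOn' hU (hB i) hp
  have hd1x : ∀ i, DifferentiableAt ℝ (d1 (x i)) p := fun i =>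
    diffAt_of_contDiffOn' hU (contDiffOn_d1 hU (hx' i)) hp
  have hd2x : ∀ i, DifferentiableAt ℝ (d2 (x i)) p := fun i =>
    diffAt_of_contDiffOn' hU (contDiffOn_d2 hU (hx' i)) hp
  have key : ∀ i : Fin 3, pb (x i) (Bf x f i) p
      = d2 (fun q => d1 (x i) q * Bf x f i q) p - d1 (fun q => d2 (x i) q * Bf x f i q) p := by
    intro i
    rw [pb, d2_mul (hd1x i) (hdB i), d1_mul (hd2x i) (hdB i), clairaut hU (hx' i) hp]
    ring
  have hsum1 : (fun q => ∑ i : Fin 3, d1 (x i) q * Bf x f i q) = A2 x f := by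
    funext q
    simp only [Bf, A2, EE, FF, Fin.sum_univ_three]
    ring
  have hsum2 : (fun q => ∑ i : Fin 3, d2 (x i) q * Bf x f i q) = fun q => -A1 x f q := by
    funext q
    simp only [Bf, A1, GG, FF, Fin.sum_univ_three]
    ring
  have hRHS : ∑ i : Fin 3,
        (1 / Real.sqrt (metg x p).det) *
          pb (x i) (fun q => (1 / Real.sqrt (metg x q).det) * pb (x i) f q) p
      = (1 / rho x p) * (d1 (A1 x f) p + d2 (A2 x f) p) := by
    rw [metg_det]
    have : ∀ i : Fin 3, pb (x i) (fun q => (1 / Real.sqrt (metg x q).det) * pb (x i) f q) p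
        = pb (x i) (Bf x f i) p := fun i => by rw [hWB i]
    calc ∑ i : Fin 3, (1 / rho x p) *
            pb (x i) (fun q => (1 / Real.sqrt (metg x q).det) * pb (x i) f q) p
        = (1 / rho x p) * ∑ i : Fin 3, pb (x i) (Bf x f i) p := by
          rw [Finset.mul_sum]; exact Finset.sum_congr rfl fun i _ => by rw [this i]
      _ = (1 / rho x p) * (d2 (A2 x f) p - d1 (fun q => -A1 x f q) p) := by
          congr 1
          rw [Finset.sum_congr rfl fun i _ => key i, Finset.sum_sub_distrib,
            ← d2_sum (A := fun i q => d1 (x i) q * Bf x f i q) (fun i => (hd1x i).mul (hdB i)),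
            ← d1_sum (A := fun i q => d2 (x i) q * Bf x f i q) (fun i => (hd2x i).mul (hdB i)), hsum1, hsum2]
      _ = (1 / rho x p) * (d1 (A1 x f) p + d2 (A2 x f) p) := by
          rw [d1_neg]; ring
  rw [hLHS, hRHS]
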